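/- Let v : ℝⁿ → ℝ be a smooth function with positive definite Hessian of the form v(y) = ½|y|² + ψ(y) with ψ smooth and ℤⁿ-periodic, satisfying Σ_{i,j} v^{ij} L_{ij} = Ã where L = log det(Hess v) and (v^{ij}) is the inverse Hessian. Suppose the function f(y) = L(y) + ½|y|² + 2ψ(y) attains a global minimum at a point p. Then the trace of the inverse Hessian satisfies Σ_i v^{ii}(p) ≤ sup|Ã| + 2n. -/

import Mathlib

/-! At a minimum `p` of `f = L + ½|y|² + 2ψ` the Hessian `Hess L + 2 Hess v - I` of `f` is
positive semidefinite. Pairing it with the positive definite inverse Hessian `(v^{ij})` gives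
`0 ≤ Ã(p) + 2n - Σ v^{ii}(p)`, because the trace of a product of two positive semidefinite
matrices is nonnegative (Schur product theorem). Finally `Ã` is continuous and ℤⁿ-periodic, since
`Hess v = I + Hess ψ` is; hence `|Ã|` is bounded and `⨆ y, |Ã y|` is its true supremum rather
than the junk value `0`. -/

open MeasureTheory Matrix

/-- Partial derivative in the `i`-th coordinate direction. -/
noncomputable def pd {n : ℕ} (i : Fin n) (f : (Fin n → ℝ) → ℝ) (x : Fin n → ℝ) : ℝ :=
  fderiv ℝ f x (Pi.single i 1)

/-- Hessian matrix `(u_{ij})` of `u` at `x`. -/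
noncomputable def hess {n : ℕ} (u : (Fin n → ℝ) → ℝ) (x : Fin n → ℝ) :
    Matrix (Fin n) (Fin n) ℝ :=
  Matrix.of fun i j => pd i (pd j u) x

/-- `f : ℝⁿ → ℝ` is ℤⁿ-periodic. -/
def ZPer {n : ℕ} (f : (Fin n → ℝ) → ℝ) : Prop :=
  ∀ (x : Fin n → ℝ) (k : Fin n → ℤ), f (x + fun i => (k i : ℝ)) = f x

/-- Abreu's operator `∑_{i,j} ∂²u^{ij}/∂x_i∂x_j`, where `(u^{ij})` is the inverse Hessian. -/
noncomputable def abreuOp {n : ℕ} (u : (Fin n → ℝ) → ℝ) (x : Fin n → ℝ) : ℝ :=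
  ∑ i, ∑ j, pd i (pd j (fun z => (hess u z)⁻¹ i j)) x

section LineRestriction

variable {E F : Type*} [NormedAddCommGroup E] [NormedSpace ℝ E]
  [NormedAddCommGroup F] [NormedSpace ℝ F]

theorem IsLocalMin.deriv_deriv_nonneg {g : ℝ → ℝ} {a : ℝ} (h : IsLocalMin g a)
    (hc : ContinuousAt g a) : 0 ≤ deriv (deriv g) a := by
  by_contra! hneg
  -- `g'' a < 0` would make `a` a local maximum as well, so `g` would be locally constant.
  have hmax := isLocalMax_of_deriv_deriv_neg hneg h.deriv_eq_zero hc
  have hconst : g =ᶠ[nhds a] fun _ => g a := by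
    filter_upwards [h, hmax] with x hmin hmax' using le_antisymm hmax' hmin
  have : deriv (deriv g) a = 0 := by
    rw [(hconst.deriv.trans (Filter.Eventually.of_forall fun _ => deriv_const _ _)).deriv_eq]
    exact deriv_const _ _
  exact hneg.ne this

theorem hasDerivAt_comp_line {h : E → F} {p w : E} {t : ℝ}
    (hh : DifferentiableAt ℝ h (p + t • w)) :
    HasDerivAt (fun s : ℝ => h (p + s • w)) (fderiv ℝ h (p + t • w) w) t :=
  hh.hasFDerivAt.comp_hasDerivAt t (by simpa using ((hasDerivAt_id t).smul_const w).const_add p)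

theorem deriv_deriv_comp_line {f : E → ℝ} (hf : ContDiff ℝ 2 f) (p w : E) :
    deriv (deriv fun s : ℝ => f (p + s • w)) 0 = fderiv ℝ (fderiv ℝ f) p w w := by
  have hf' : Differentiable ℝ (fderiv ℝ f) :=
    (hf.fderiv_right (m := 1) (by norm_num)).differentiable one_ne_zero
  have hderiv : deriv (fun s : ℝ => f (p + s • w)) = fun s => fderiv ℝ f (p + s • w) w :=
    funext fun s => (hasDerivAt_comp_line (hf.differentiable two_ne_zero _)).deriv
  rw [hderiv]
  have := (hasDerivAt_comp_line (t := 0) (hf' (p + (0 : ℝ) • w))).clm_apply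
    (hasDerivAt_const 0 w)
  simpa using this.deriv

theorem IsLocalMin.fderiv_fderiv_apply_self_nonneg {f : E → ℝ} {p : E} (h : IsLocalMin f p)
    (hf : ContDiff ℝ 2 f) (w : E) : 0 ≤ fderiv ℝ (fderiv ℝ f) p w w := by
  have hline : Continuous fun s : ℝ => p + s • w := by fun_prop
  have hmin : IsLocalMin (fun s : ℝ => f (p + s • w)) 0 :=
    IsLocalMin.comp_continuous (g := fun s : ℝ => p + s • w) (by simpa using h)
      hline.continuousAt
  rw [← deriv_deriv_comp_line hf]
  exact hmin.deriv_deriv_nonneg (hf.continuous.comp hline).continuousAt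

end LineRestriction

section Hessian

variable {n : ℕ}

theorem ContDiff.pd {f : (Fin n → ℝ) → ℝ} {k m : WithTop ℕ∞} (hf : ContDiff ℝ k f)
    (hmk : m + 1 ≤ k) (i : Fin n) : ContDiff ℝ m (pd i f) :=
  (hf.fderiv_right hmk).clm_apply contDiff_const

theorem ContDiff.hess_apply {f : (Fin n → ℝ) → ℝ} {k m : WithTop ℕ∞} (hf : ContDiff ℝ k f)
    (hmk : m + 2 ≤ k) (i j : Fin n) : ContDiff ℝ m fun x => hess f x i j :=
  ((hf.pd (m := m + 1) (by rwa [add_assoc, one_add_one_eq_two]) j).pd le_rfl i)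

theorem ContDiff.continuous_hess {f : (Fin n → ℝ) → ℝ} (hf : ContDiff ℝ 2 f) :
    Continuous (hess f) :=
  continuous_matrix fun i j => (hf.hess_apply (m := 0) (by simp) i j).continuous

theorem pd_add {f g : (Fin n → ℝ) → ℝ} {x : Fin n → ℝ} (hf : DifferentiableAt ℝ f x)
    (hg : DifferentiableAt ℝ g x) (i : Fin n) :
    pd i (fun y => f y + g y) x = pd i f x + pd i g x := by
  simp only [pd, fderiv_fun_add hf hg]
  rfl

theorem pd_const_mul {f : (Fin n → ℝ) → ℝ} {x : Fin n → ℝ} (hf : DifferentiableAt ℝ f x)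
    (c : ℝ) (i : Fin n) : pd i (fun y => c * f y) x = c * pd i f x := by
  simp only [pd, fderiv_const_mul hf]
  rfl

theorem hess_add {f g : (Fin n → ℝ) → ℝ} (hf : ContDiff ℝ 2 f) (hg : ContDiff ℝ 2 g)
    (x : Fin n → ℝ) : hess (fun y => f y + g y) x = hess f x + hess g x := by
  ext i j
  have hpd : pd j (fun y => f y + g y) = fun y => pd j f y + pd j g y :=
    funext fun y => pd_add (hf.differentiable two_ne_zero y) (hg.differentiable two_ne_zero y) j
  simp only [hess, of_apply, Matrix.add_apply, hpd]
  exact pd_add ((hf.pd (m := 1) (by norm_num) j).differentiable one_ne_zero x)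
    ((hg.pd (m := 1) (by norm_num) j).differentiable one_ne_zero x) i

theorem hess_const_mul {f : (Fin n → ℝ) → ℝ} (hf : ContDiff ℝ 2 f) (c : ℝ) (x : Fin n → ℝ) :
    hess (fun y => c * f y) x = c • hess f x := by
  ext i j
  have hpd : pd j (fun y => c * f y) = fun y => c * pd j f y :=
    funext fun y => pd_const_mul (hf.differentiable two_ne_zero y) c j
  simp only [hess, of_apply, Matrix.smul_apply, smul_eq_mul, hpd]
  exact pd_const_mul ((hf.pd (m := 1) (by norm_num) j).differentiable one_ne_zero x) c i

theorem pd_half_sum_sq (j : Fin n) :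
    pd j (fun y => (1 / 2 : ℝ) * ∑ i, y i ^ 2) = fun x => x j := by
  funext x
  have : HasFDerivAt (fun y : Fin n → ℝ => (1 / 2 : ℝ) * ∑ i, y i ^ 2)
      ((1 / 2 : ℝ) • ∑ i, (2 * x i) • ContinuousLinearMap.proj (R := ℝ) (φ := fun _ => ℝ) i)
        x := by
    refine HasFDerivAt.const_mul (HasFDerivAt.fun_sum fun i _ => ?_) _
    simpa using (hasFDerivAt_apply (𝕜 := ℝ) i x).pow 2
  rw [pd, this.fderiv]
  simp [Pi.single_apply]

theorem hess_half_sum_sq (x : Fin n → ℝ) : hess (fun y => (1 / 2 : ℝ) * ∑ i, y i ^ 2) x = 1 := by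
  ext i j
  simp only [hess, of_apply, pd_half_sum_sq]
  rw [pd, (hasFDerivAt_apply j x).fderiv]
  simp [Pi.single_apply, one_apply, eq_comm]

theorem hess_apply_eq_fderiv_fderiv {f : (Fin n → ℝ) → ℝ} (hf : ContDiff ℝ 2 f)
    (x : Fin n → ℝ) (i j : Fin n) :
    hess f x i j = fderiv ℝ (fderiv ℝ f) x (Pi.single i 1) (Pi.single j 1) := by
  have hf' : DifferentiableAt ℝ (fderiv ℝ f) x :=
    (hf.fderiv_right (m := 1) (by norm_num)).differentiable one_ne_zero x
  have := (hf'.hasFDerivAt.clm_apply (hasFDerivAt_const (Pi.single j (1 : ℝ)) x)).fderiv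
  change fderiv ℝ (fun y => fderiv ℝ f y (Pi.single j 1)) x (Pi.single i 1) = _
  simp [this]

theorem hess_eq_toMatrix₂' {f : (Fin n → ℝ) → ℝ} (hf : ContDiff ℝ 2 f) (x : Fin n → ℝ) :
    hess f x = LinearMap.toMatrix₂' ℝ (fderiv ℝ (fderiv ℝ f) x).toLinearMap₁₂ := by
  ext i j
  simp [hess_apply_eq_fderiv_fderiv hf]

theorem dotProduct_hess_mulVec {f : (Fin n → ℝ) → ℝ} (hf : ContDiff ℝ 2 f) (x w : Fin n → ℝ) :
    w ⬝ᵥ hess f x *ᵥ w = fderiv ℝ (fderiv ℝ f) x w w := by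
  rw [hess_eq_toMatrix₂' hf, ← Matrix.toLinearMap₂'_apply', Matrix.toLinearMap₂'_toMatrix']
  simp

theorem isSymm_hess {f : (Fin n → ℝ) → ℝ} (hf : ContDiff ℝ 2 f) (x : Fin n → ℝ) :
    (hess f x).IsSymm := by
  ext i j
  simp only [transpose_apply, hess_apply_eq_fderiv_fderiv hf]
  exact (hf.contDiffAt.isSymmSndFDerivAt (by simp)) _ _

theorem IsLocalMin.posSemidef_hess {f : (Fin n → ℝ) → ℝ} {p : Fin n → ℝ} (h : IsLocalMin f p)
    (hf : ContDiff ℝ 2 f) : (hess f p).PosSemidef := by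
  refine posSemidef_iff_dotProduct_mulVec.mpr ⟨?_, fun w => ?_⟩
  · rw [IsHermitian, conjTranspose_eq_transpose_of_trivial]
    exact isSymm_hess hf p
  · rw [star_trivial, dotProduct_hess_mulVec hf]
    exact h.fderiv_fderiv_apply_self_nonneg hf w

end Hessian

section Periodic

variable {n : ℕ}

theorem ZPer.pd {f : (Fin n → ℝ) → ℝ} (h : ZPer f) (i : Fin n) : ZPer (_root_.pd i f) := by
  intro x k
  simp only [_root_.pd]
  rw [← fderiv_comp_add_right]
  simp_rw [h _ k]

theorem ZPer.hess_add_int {f : (Fin n → ℝ) → ℝ} (h : ZPer f) (x : Fin n → ℝ) (k : Fin n → ℤ) :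
    hess f (x + fun i => (k i : ℝ)) = hess f x := by
  ext i j
  exact (h.pd j).pd i x k

theorem ZPer.bddAbove_range {f : (Fin n → ℝ) → ℝ} (h : ZPer f) (hc : Continuous f) :
    BddAbove (Set.range f) := by
  refine ((isCompact_Icc (a := 0) (b := 1)).image hc).bddAbove.mono ?_
  rintro _ ⟨y, rfl⟩
  refine ⟨fun i => Int.fract (y i),
    ⟨fun i => Int.fract_nonneg _, fun i => (Int.fract_lt_one _).le⟩, ?_⟩
  have hy : y = (fun i => Int.fract (y i)) + fun i => ((⌊y i⌋ : ℤ) : ℝ) := by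
    funext i
    exact (Int.fract_add_floor (y i)).symm
  conv_rhs => rw [hy]
  exact (h _ _).symm

end Periodic

section MatrixFunctions

variable {m : Type*} [Fintype m]

theorem Continuous.matrix_inv [DecidableEq m] {X K : Type*} [TopologicalSpace X] [Field K]
    [TopologicalSpace K] [IsTopologicalDivisionRing K] {A : X → Matrix m m K} (hA : Continuous A)
    (hdet : ∀ x, (A x).det ≠ 0) : Continuous fun x => (A x)⁻¹ := by
  refine continuous_iff_continuousAt.2 fun x => ?_
  refine (continuousAt_matrix_inv _ ?_).comp hA.continuousAt
  rw [Ring.inverse_eq_inv']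
  exact continuousAt_inv₀ (hdet x)

theorem ContDiff.matrix_det [DecidableEq m] {E : Type*} [NormedAddCommGroup E] [NormedSpace ℝ E]
    {A : E → Matrix m m ℝ} {k : WithTop ℕ∞} (hA : ∀ i j, ContDiff ℝ k fun x => A x i j) :
    ContDiff ℝ k fun x => (A x).det := by
  simp only [det_apply]
  exact ContDiff.sum fun σ _ => (contDiff_prod fun i _ => hA _ _).const_smul _

open scoped ComplexOrder in
theorem Matrix.PosSemidef.trace_mul_nonneg {𝕜 : Type*} [RCLike 𝕜] {A B : Matrix m m 𝕜}
    (hA : A.PosSemidef) (hB : B.PosSemidef) : 0 ≤ trace (A * B) := by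
  have hAB := hA.hadamard hB.transpose
  rw [← transpose_transpose B, ← sum_hadamard_eq]
  simpa [dotProduct, mulVec, Finset.mul_sum] using hAB.dotProduct_mulVec_nonneg 1

theorem Matrix.PosDef.trace_inv_le [DecidableEq m] {C M : Matrix m m ℝ} (hC : C.PosDef)
    (hM : (M + 2 • C - 1).PosSemidef) :
    trace C⁻¹ ≤ trace (C⁻¹ * M) + 2 * Fintype.card m := by
  have h := hC.inv.posSemidef.trace_mul_nonneg hM
  rw [mul_sub, mul_add, mul_smul_comm, nonsing_inv_mul C (isUnit_iff_ne_zero.2 hC.det_pos.ne'),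
    mul_one, trace_sub, trace_add, trace_smul, trace_one, nsmul_eq_mul] at h
  linarith

end MatrixFunctions

section AbreuEquation

variable {n : ℕ}

theorem ContDiff.log_det_hess {f : (Fin n → ℝ) → ℝ} {k : WithTop ℕ∞} (hf : ContDiff ℝ (k + 2) f)
    (hdet : ∀ y, 0 < (hess f y).det) : ContDiff ℝ k fun y => Real.log (hess f y).det :=
  (ContDiff.matrix_det fun i j => hf.hess_apply le_rfl i j).log fun y => (hdet y).ne'

theorem bddAbove_abs_inv_hess_mul_hess_log_det {v : (Fin n → ℝ) → ℝ} (hv : ContDiff ℝ 4 v)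
    (hdet : ∀ y, 0 < (hess v y).det)
    (hper : ∀ y (k : Fin n → ℤ), hess v (y + fun i => (k i : ℝ)) = hess v y) :
    BddAbove (Set.range fun y => |∑ i, ∑ j,
      (hess v y)⁻¹ i j * hess (fun z => Real.log (hess v z).det) y i j|) := by
  have hL : ContDiff ℝ 2 fun z => Real.log (hess v z).det := hv.log_det_hess hdet
  have hL_per : ZPer fun z => Real.log (hess v z).det := fun y k => by simp only [hper]
  have hinv : Continuous fun y => (hess v y)⁻¹ :=
    (hv.of_le (by norm_num) : ContDiff ℝ 2 v).continuous_hess.matrix_inv fun y => (hdet y).ne'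
  refine ZPer.bddAbove_range (fun y k => by simp only [hper, hL_per.hess_add_int]) ?_
  refine (continuous_finsetSum _ fun i _ => continuous_finsetSum _ fun j _ => ?_).abs
  exact (hinv.matrix_elem i j).mul (hL.continuous_hess.matrix_elem i j)

end AbreuEquation

theorem trace_bound_at_min {n : ℕ} (ψ Atilde : (Fin n → ℝ) → ℝ)
    (hψ : ContDiff ℝ (⊤ : ℕ∞) ψ) (hper : ZPer ψ)
    (v : (Fin n → ℝ) → ℝ) (hv : ∀ y, v y = (1 / 2 : ℝ) * ∑ i, y i ^ 2 + ψ y)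
    (hpos : ∀ y, (hess v y).PosDef)
    (heq : ∀ y, ∑ i, ∑ j,
      (hess v y)⁻¹ i j * hess (fun z => Real.log (hess v z).det) y i j = Atilde y)
    (p : Fin n → ℝ)
    (hmin : ∀ y,
      Real.log (hess v p).det + (1 / 2 : ℝ) * ∑ i, p i ^ 2 + 2 * ψ p ≤
        Real.log (hess v y).det + (1 / 2 : ℝ) * ∑ i, y i ^ 2 + 2 * ψ y) :
    ∑ i, (hess v p)⁻¹ i i ≤ (⨆ y, |Atilde y|) + 2 * n := by
  have hq : ContDiff ℝ 2 fun y : Fin n → ℝ => (1 / 2 : ℝ) * ∑ i, y i ^ 2 := by fun_prop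
  have hψ4 : ContDiff ℝ 4 ψ := hψ.of_le (by norm_cast)
  have hψ2 : ContDiff ℝ 2 ψ := hψ4.of_le (by norm_num)
  have hv4 : ContDiff ℝ 4 v := by rw [funext hv]; fun_prop
  have hess_v : ∀ y, hess v y = 1 + hess ψ y := fun y => by
    rw [funext hv, hess_add hq hψ2, hess_half_sum_sq]
  have hbdd := bddAbove_abs_inv_hess_mul_hess_log_det hv4 (fun y => (hpos y).det_pos)
    fun y k => by rw [hess_v, hess_v, hper.hess_add_int]
  simp only [heq] at hbdd
  set L : (Fin n → ℝ) → ℝ := fun z => Real.log (hess v z).det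
  have hLC : ContDiff ℝ 2 L := hv4.log_det_hess fun y => (hpos y).det_pos
  have hlocmin : IsLocalMin (fun y => L y + (1 / 2 : ℝ) * ∑ i, y i ^ 2 + 2 * ψ y) p :=
    Filter.Eventually.of_forall hmin
  have hB := hlocmin.posSemidef_hess (by fun_prop)
  rw [hess_add (hLC.add hq) (contDiff_const.mul hψ2), hess_add hLC hq, hess_const_mul hψ2,
    hess_half_sum_sq, show hess ψ p = hess v p - 1 by rw [hess_v]; abel] at hB
  have htrace := (hpos p).trace_inv_le (M := hess L p) (by convert hB using 1; module)
  rw [← (isSymm_hess hLC p).eq, ← sum_hadamard_eq] at htrace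
  simp only [hadamard_apply, heq p, Fintype.card_fin] at htrace
  calc ∑ i, (hess v p)⁻¹ i i = trace (hess v p)⁻¹ := rfl
    _ ≤ Atilde p + 2 * n := htrace
    _ ≤ (⨆ y, |Atilde y|) + 2 * n := by
      gcongr
      exact (le_abs_self _).trans (le_ciSup hbdd p)
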